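/- arXiv:nlin/0004017 — 7 statements merged into one kernel-verified Lean document; each statement's English description precedes it below -/
import Mathlib

section
/- Let u : ℝ² → ℝ be continuous and κ ∈ ℝ. Suppose there are a measurable function U : ℝ → [0,∞) and a constant q < 1/2 with |u(x₁,x₂)| ≤ U(x₂) for all (x₁,x₂) and ∫₀^∞ U(x₂ − s) ds ≤ q for all x₂ ∈ ℝ. Then every bounded continuous solution χ of the modified Jost integral equation at spectral parameter k = iκ satisfies χ(x₁,x₂) > 0 for all (x₁,x₂) ∈ ℝ². -/
/-!
Let `S = sup |χ|`. For `y₂ < x₂` the kernel of the Jost equation is, in `y₁`, a Gaussian of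
total mass `2√π`, so by Tonelli the integral term is at most `2√π q S`, i.e. `|χ - 1| ≤ q S`
everywhere. Hence `S ≤ 1 + q S`, so `q S ≤ q / (1 - q) < 1` because `q < 1/2`, and
`χ ≥ 1 - q S > 0`.
-/

open MeasureTheory Set

/-- The kernel of the Jost integral equation, without its factor `1 / (2√π)`. -/
noncomputable def driftHeatKernel (κ : ℝ) (x y : ℝ × ℝ) : ℝ :=
  Real.exp (-(x.1 - y.1 + 2 * κ * (x.2 - y.2)) ^ 2 / (4 * (x.2 - y.2))) / Real.sqrt (x.2 - y.2)

namespace driftHeatKernel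

variable (κ : ℝ) (x : ℝ × ℝ)

theorem nonneg (y : ℝ × ℝ) : 0 ≤ driftHeatKernel κ x y := by
  unfold driftHeatKernel; positivity

theorem measurable : Measurable (driftHeatKernel κ x) := by
  unfold driftHeatKernel; fun_prop

theorem eq_gaussian {y₂ : ℝ} (hy : y₂ < x.2) (y₁ : ℝ) :
    driftHeatKernel κ x (y₁, y₂) =
      Real.exp (-(4 * (x.2 - y₂))⁻¹ * (y₁ - (x.1 + 2 * κ * (x.2 - y₂))) ^ 2) /
        Real.sqrt (x.2 - y₂) := by
  have : 4 * (x.2 - y₂) ≠ 0 := by linarith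
  unfold driftHeatKernel; congr 2; field_simp; ring

theorem integral_prodMk_right {y₂ : ℝ} (hy : y₂ < x.2) :
    ∫ y₁, driftHeatKernel κ x (y₁, y₂) = 2 * Real.sqrt Real.pi := by
  have ht : 0 < x.2 - y₂ := sub_pos.2 hy
  simp_rw [eq_gaussian κ x hy]
  rw [integral_sub_right_eq_self (fun z => Real.exp (-(4 * (x.2 - y₂))⁻¹ * z ^ 2) /
    Real.sqrt (x.2 - y₂)), integral_div, integral_gaussian, div_inv_eq_mul,
    Real.sqrt_mul' _ (by positivity), Real.sqrt_mul' _ ht.le,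
    show Real.sqrt 4 = 2 by rw [show (4 : ℝ) = 2 ^ 2 by norm_num, Real.sqrt_sq two_pos.le]]
  field_simp [(Real.sqrt_pos.2 ht).ne']

theorem integrable_prodMk_right {y₂ : ℝ} (hy : y₂ < x.2) :
    Integrable fun y₁ => driftHeatKernel κ x (y₁, y₂) := by
  have hb : 0 < (4 * (x.2 - y₂))⁻¹ := by have := sub_pos.2 hy; positivity
  simp_rw [eq_gaussian κ x hy]
  exact ((integrable_exp_neg_mul_sq hb).div_const _).comp_sub_right _

theorem lintegral_prodMk_right {y₂ : ℝ} (hy : y₂ < x.2) :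
    ∫⁻ y₁, ENNReal.ofReal (driftHeatKernel κ x (y₁, y₂)) =
      ENNReal.ofReal (2 * Real.sqrt Real.pi) := by
  rw [← integral_prodMk_right κ x hy, ofReal_integral_eq_lintegral_ofReal
    (integrable_prodMk_right κ x hy) (ae_of_all _ fun _ => nonneg κ x _)]

theorem setLIntegral_mul_comp_snd {g : ℝ → ℝ} (hg : Measurable g) :
    ∫⁻ y in {y : ℝ × ℝ | y.2 < x.2}, ENNReal.ofReal (driftHeatKernel κ x y * g y.2) =
      ENNReal.ofReal (2 * Real.sqrt Real.pi) * ∫⁻ s in Ioi 0, ENNReal.ofReal (g (x.2 - s)) := by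
  have hhalf : {y : ℝ × ℝ | y.2 < x.2} = univ ×ˢ Iio x.2 := by ext; simp
  have hfst : ∀ y₂ ∈ Iio x.2, ∫⁻ y₁, ENNReal.ofReal (driftHeatKernel κ x (y₁, y₂) * g y₂) =
      ENNReal.ofReal (2 * Real.sqrt Real.pi) * ENNReal.ofReal (g y₂) := fun y₂ hy => by
    simp_rw [ENNReal.ofReal_mul (nonneg κ x _)]
    rw [lintegral_mul_const' _ _ ENNReal.ofReal_ne_top, lintegral_prodMk_right κ x hy]
  have hpre : (fun s => x.2 - s) ⁻¹' Iio x.2 = Ioi 0 := by ext; simp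
  rw [hhalf, Measure.volume_eq_prod, ← Measure.prod_restrict, Measure.restrict_univ,
    lintegral_prod_symm' (fun y => ENNReal.ofReal (driftHeatKernel κ x y * g y.2))
      ((measurable κ x).mul (hg.comp measurable_snd)).ennreal_ofReal,
    setLIntegral_congr_fun measurableSet_Iio hfst, lintegral_const_mul _ hg.ennreal_ofReal,
    ← hpre,
    (Measure.measurePreserving_sub_left volume x.2).setLIntegral_comp_preimage measurableSet_Iio
      hg.ennreal_ofReal]

theorem abs_setIntegral_mul_le {f : ℝ × ℝ → ℝ} {g : ℝ → ℝ} (hg : Measurable g)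
    (hfg : ∀ y, |f y| ≤ g y.2) (hgint : IntegrableOn (fun s => g (x.2 - s)) (Ioi 0)) :
    |∫ y in {y : ℝ × ℝ | y.2 < x.2}, driftHeatKernel κ x y * f y| ≤
      2 * Real.sqrt Real.pi * ∫ s in Ioi 0, g (x.2 - s) := by
  have hg0 : ∀ t, 0 ≤ g t := fun t => (abs_nonneg _).trans (hfg (0, t))
  have hpt : ∀ y, ENNReal.ofReal ‖driftHeatKernel κ x y * f y‖ ≤
      ENNReal.ofReal (driftHeatKernel κ x y * g y.2) := fun y => by
    rw [Real.norm_eq_abs, abs_mul, abs_of_nonneg (nonneg κ x y)]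
    exact ENNReal.ofReal_le_ofReal (mul_le_mul_of_nonneg_left (hfg y) (nonneg κ x y))
  have hrhs : 0 ≤ 2 * Real.sqrt Real.pi * ∫ s in Ioi 0, g (x.2 - s) :=
    mul_nonneg (by positivity) (integral_nonneg fun s => hg0 (x.2 - s))
  rw [← Real.norm_eq_abs]
  refine (norm_integral_le_lintegral_norm _).trans (ENNReal.toReal_le_of_le_ofReal hrhs ?_)
  calc ∫⁻ y in {y : ℝ × ℝ | y.2 < x.2}, ENNReal.ofReal ‖driftHeatKernel κ x y * f y‖
      ≤ ∫⁻ y in {y : ℝ × ℝ | y.2 < x.2}, ENNReal.ofReal (driftHeatKernel κ x y * g y.2) :=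
        lintegral_mono hpt
    _ = ENNReal.ofReal (2 * Real.sqrt Real.pi) * ∫⁻ s in Ioi 0, ENNReal.ofReal (g (x.2 - s)) :=
        setLIntegral_mul_comp_snd κ x hg
    _ = ENNReal.ofReal (2 * Real.sqrt Real.pi * ∫ s in Ioi 0, g (x.2 - s)) := by
        rw [ENNReal.ofReal_mul (by positivity : (0 : ℝ) ≤ 2 * Real.sqrt Real.pi),
          ofReal_integral_eq_lintegral_ofReal hgint (ae_of_all _ fun s => hg0 _)]

end driftHeatKernel

/-- If `|f|` is unbounded, `⨆ p, |f p| = 0` and the hypothesis forces `f = 1`. -/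
theorem pos_of_abs_sub_one_le_mul_iSup {α : Type*} {f : α → ℝ} {q : ℝ} (hq : q < 1 / 2)
    (h : ∀ p, |f p - 1| ≤ q * ⨆ p, |f p|) (p : α) : 0 < f p := by
  have : Nonempty α := ⟨p⟩
  set S := ⨆ p, |f p|
  have hS : S ≤ 1 + q * S := ciSup_le fun p' => by
    linarith [abs_sub_abs_le_abs_sub (f p') 1, h p', abs_one (α := ℝ)]
  have hS0 : 0 ≤ S := Real.iSup_nonneg fun p => abs_nonneg (f p)
  have hqS : q * S < 1 := by
    rcases le_or_gt q 0 with hq0 | hq0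
    · nlinarith
    · nlinarith
  linarith [(abs_le.1 (h p)).1]

theorem jost_solution_positive_general
    (u : ℝ × ℝ → ℝ) (κ : ℝ)
    (U : ℝ → ℝ) (hUmeas : Measurable U)
    (q : ℝ) (hq : q < 1 / 2)
    (hbound : ∀ x₁ x₂ : ℝ, |u (x₁, x₂)| ≤ U x₂)
    (hUint : ∀ x₂ : ℝ, IntegrableOn (fun s => U (x₂ - s)) (Set.Ioi (0 : ℝ)))
    (hUq : ∀ x₂ : ℝ, (∫ s in Set.Ioi (0 : ℝ), U (x₂ - s)) ≤ q)
    (χ : ℝ × ℝ → ℝ) (M : ℝ) (hχbdd : ∀ p : ℝ × ℝ, |χ p| ≤ M)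
    (heq : ∀ x₁ x₂ : ℝ, χ (x₁, x₂) =
      1 - (1 / (2 * Real.sqrt Real.pi)) *
        ∫ y in {y : ℝ × ℝ | y.2 < x₂},
          Real.exp (-(x₁ - y.1 + 2 * κ * (x₂ - y.2)) ^ 2 / (4 * (x₂ - y.2))) /
            Real.sqrt (x₂ - y.2) * u y * χ y) :
    ∀ x : ℝ × ℝ, 0 < χ x := by
  have hχ : BddAbove (range fun p => |χ p|) := ⟨M, forall_mem_range.2 hχbdd⟩
  refine pos_of_abs_sub_one_le_mul_iSup hq fun ⟨x₁, x₂⟩ => ?_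
  set S := ⨆ p, |χ p|
  have huχ : ∀ y : ℝ × ℝ, |u y * χ y| ≤ U y.2 * S := fun y => by
    rw [abs_mul]
    exact mul_le_mul (hbound y.1 y.2) (le_ciSup hχ y) (abs_nonneg _)
      ((abs_nonneg _).trans (hbound y.1 y.2))
  have hI := driftHeatKernel.abs_setIntegral_mul_le κ (x₁, x₂) (hUmeas.mul_const S) huχ
    ((hUint x₂).mul_const S)
  simp only [driftHeatKernel, ← mul_assoc, integral_mul_const] at hI
  rw [heq, sub_sub_cancel_left, abs_neg, abs_mul, abs_of_pos (by positivity)]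
  have hS0 : 0 ≤ S := Real.iSup_nonneg fun p => abs_nonneg (χ p)
  rw [one_div_mul_eq_div, div_le_iff₀ (by positivity)]
  calc _ ≤ (2 * Real.sqrt Real.pi * ∫ s in Ioi 0, U (x₂ - s)) * S := hI
    _ ≤ (2 * Real.sqrt Real.pi * q) * S := by gcongr; exact hUq x₂
    _ = q * S * (2 * Real.sqrt Real.pi) := by ring

/-- Let `u : ℝ² → ℝ` be continuous and `κ ∈ ℝ`. Suppose there are a
measurable function `U : ℝ → [0,∞)` and a constant `q < 1/2` with `|u(x₁,x₂)| ≤ U x₂`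
for all `(x₁,x₂)` and `∫₀^∞ U (x₂ - s) ds ≤ q` for all `x₂`. Then every bounded continuous
solution `χ` of the modified Jost integral equation at spectral parameter `k = iκ`
satisfies `χ x > 0` everywhere. -/
theorem jost_solution_positive
    (u : ℝ × ℝ → ℝ) (hu : Continuous u) (κ : ℝ)
    (U : ℝ → ℝ) (hUmeas : Measurable U) (hUnn : ∀ t, 0 ≤ U t)
    (q : ℝ) (hq : q < 1 / 2)
    (hbound : ∀ x₁ x₂ : ℝ, |u (x₁, x₂)| ≤ U x₂)
    (hUint : ∀ x₂ : ℝ, IntegrableOn (fun s => U (x₂ - s)) (Set.Ioi (0 : ℝ)))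
    (hUq : ∀ x₂ : ℝ, (∫ s in Set.Ioi (0 : ℝ), U (x₂ - s)) ≤ q)
    (χ : ℝ × ℝ → ℝ) (hχcont : Continuous χ) (M : ℝ) (hχbdd : ∀ p : ℝ × ℝ, |χ p| ≤ M)
    (hint : ∀ x₁ x₂ : ℝ, IntegrableOn
      (fun y : ℝ × ℝ =>
        Real.exp (-(x₁ - y.1 + 2 * κ * (x₂ - y.2)) ^ 2 / (4 * (x₂ - y.2))) /
          Real.sqrt (x₂ - y.2) * u y * χ y)
      {y : ℝ × ℝ | y.2 < x₂})
    (heq : ∀ x₁ x₂ : ℝ, χ (x₁, x₂) =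
      1 - (1 / (2 * Real.sqrt Real.pi)) *
        ∫ y in {y : ℝ × ℝ | y.2 < x₂},
          Real.exp (-(x₁ - y.1 + 2 * κ * (x₂ - y.2)) ^ 2 / (4 * (x₂ - y.2))) /
            Real.sqrt (x₂ - y.2) * u y * χ y) :
    ∀ x : ℝ × ℝ, 0 < χ x :=
  jost_solution_positive_general u κ U hUmeas q hq hbound hUint hUq χ M hχbdd heq
end

section
/- Let u : ℝ² → ℝ be continuous and κ ∈ ℝ. Suppose there are a measurable function U : ℝ → [0,∞) and a constant q < 1/2 with |u(x₁,x₂)| ≤ U(x₂) for all (x₁,x₂) and ∫₀^∞ U(x₂ + s) ds ≤ q for all x₂ ∈ ℝ. Then every bounded continuous solution ξ of the dual modified Jost integral equation at spectral parameter k = iκ satisfies ξ(x₁,x₂) > 0 for all (x₁,x₂) ∈ ℝ². -/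
/-!
For `y₂ > x₂` the kernel integrates in `y₁` to `2√π` (a Gaussian of variance `2 (y₂ - x₂)`,
divided by `√(y₂ - x₂)`), so by Tonelli a bound `|ξ| ≤ C` gives `|1 - ξ| ≤ q C` through the
equation. Taking `C = S = sup |ξ|` yields `S ≤ 1 + q S`, hence `S ≤ 1 / (1 - q)`, and then
`ξ ≥ 1 - q / (1 - q) > 0` because `q < 1 / 2`.
-/

open MeasureTheory Set Real

noncomputable def dualJostKernel (κ : ℝ) (x y : ℝ × ℝ) : ℝ :=
  exp (-(y.1 - x.1 + 2 * κ * (y.2 - x.2)) ^ 2 / (4 * (y.2 - x.2))) / √(y.2 - x.2)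

lemma dualJostKernel_nonneg (κ : ℝ) (x y : ℝ × ℝ) : 0 ≤ dualJostKernel κ x y := by
  unfold dualJostKernel; positivity

@[fun_prop]
lemma measurable_dualJostKernel (κ : ℝ) (x : ℝ × ℝ) : Measurable (dualJostKernel κ x) := by
  unfold dualJostKernel; fun_prop

lemma exp_neg_sq_add_div_eq (c : ℝ) {t : ℝ} (ht : 0 < t) :
    (fun a : ℝ => exp (-(a + c) ^ 2 / (4 * t))) = fun a => exp (-(4 * t)⁻¹ * (a + c) ^ 2) := by
  ext a; congr 1; field_simp

lemma integrable_exp_neg_sq_add_div (c : ℝ) {t : ℝ} (ht : 0 < t) :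
    Integrable fun a : ℝ => exp (-(a + c) ^ 2 / (4 * t)) := by
  rw [exp_neg_sq_add_div_eq c ht]
  exact (integrable_exp_neg_mul_sq (by positivity)).comp_add_right c

lemma integral_exp_neg_sq_add_div (c : ℝ) {t : ℝ} (ht : 0 < t) :
    ∫ a : ℝ, exp (-(a + c) ^ 2 / (4 * t)) = 2 * √π * √t := by
  rw [exp_neg_sq_add_div_eq c ht, integral_add_right_eq_self (fun a => exp (-(4 * t)⁻¹ * a ^ 2)),
    integral_gaussian, div_inv_eq_mul, show π * (4 * t) = 2 ^ 2 * π * t by ring,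
    sqrt_mul' _ ht.le, sqrt_mul (sq_nonneg 2), sqrt_sq zero_le_two]

lemma lintegral_dualJostKernel_fst (κ : ℝ) (x : ℝ × ℝ) {b : ℝ} (hb : x.2 < b) :
    ∫⁻ a, ENNReal.ofReal (dualJostKernel κ x (a, b)) = ENNReal.ofReal (2 * √π) := by
  have ht : 0 < b - x.2 := sub_pos.mpr hb
  have hshift : ∀ a, a - x.1 + 2 * κ * (b - x.2) = a + (2 * κ * (b - x.2) - x.1) := fun a => by ring
  simp only [dualJostKernel, hshift]
  rw [← ofReal_integral_eq_lintegral_ofReal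
    ((integrable_exp_neg_sq_add_div _ ht).div_const _) (ae_of_all _ fun a => by positivity),
    integral_div, integral_exp_neg_sq_add_div _ ht, mul_div_cancel_right₀ _ (sqrt_pos.mpr ht).ne']

lemma lintegral_Ioi_comp_const_add (f : ℝ → ENNReal) (x : ℝ) :
    ∫⁻ s in Ioi 0, f (x + s) = ∫⁻ b in Ioi x, f b := by
  rw [(measurePreserving_add_left volume x).setLIntegral_comp_emb
    (measurableEmbedding_addLeft x), image_const_add_Ioi, add_zero]

lemma lintegral_dualJostKernel_mul (κ : ℝ) (x : ℝ × ℝ) {W : ℝ → ENNReal} (hW : Measurable W) :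
    ∫⁻ y in {y : ℝ × ℝ | x.2 < y.2}, ENNReal.ofReal (dualJostKernel κ x y) * W y.2 =
      ENNReal.ofReal (2 * √π) * ∫⁻ b in Ioi x.2, W b := by
  have hS : {y : ℝ × ℝ | x.2 < y.2} = univ ×ˢ Ioi x.2 := by ext; simp
  rw [hS, Measure.volume_eq_prod, ← Measure.prod_restrict, Measure.restrict_univ,
    lintegral_prod_symm _ (by fun_prop), ← lintegral_const_mul _ hW]
  refine setLIntegral_congr_fun measurableSet_Ioi fun b hb => ?_
  dsimp only
  rw [lintegral_mul_const _ (by fun_prop), lintegral_dualJostKernel_fst κ x hb]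

lemma abs_setIntegral_dualJostKernel_mul_le (κ : ℝ) (x : ℝ × ℝ) {v : ℝ × ℝ → ℝ} {V : ℝ → ℝ}
    (hV : Measurable V) (hv : ∀ y, |v y| ≤ V y.2)
    (hVint : IntegrableOn (fun s => V (x.2 + s)) (Ioi 0)) :
    |∫ y in {y : ℝ × ℝ | x.2 < y.2}, dualJostKernel κ x y * v y| ≤
      2 * √π * ∫ s in Ioi 0, V (x.2 + s) := by
  have hV0 : ∀ b, 0 ≤ V b := fun b => (abs_nonneg _).trans (hv (0, b))
  have hlint : ∫⁻ y in {y : ℝ × ℝ | x.2 < y.2}, ENNReal.ofReal ‖dualJostKernel κ x y * v y‖ ≤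
      ENNReal.ofReal (2 * √π * ∫ s in Ioi 0, V (x.2 + s)) := calc
    _ ≤ ∫⁻ y in {y : ℝ × ℝ | x.2 < y.2},
          ENNReal.ofReal (dualJostKernel κ x y) * ENNReal.ofReal (V y.2) := by
      refine lintegral_mono fun y => ?_
      rw [← ENNReal.ofReal_mul (dualJostKernel_nonneg κ x y), Real.norm_eq_abs, abs_mul,
        abs_of_nonneg (dualJostKernel_nonneg κ x y)]
      exact ENNReal.ofReal_le_ofReal
        (mul_le_mul_of_nonneg_left (hv y) (dualJostKernel_nonneg κ x y))
    _ = ENNReal.ofReal (2 * √π) * ∫⁻ s in Ioi 0, ENNReal.ofReal (V (x.2 + s)) := by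
      rw [lintegral_dualJostKernel_mul κ x hV.ennreal_ofReal,
        lintegral_Ioi_comp_const_add (fun b => ENNReal.ofReal (V b))]
    _ = ENNReal.ofReal (2 * √π * ∫ s in Ioi 0, V (x.2 + s)) := by
      rw [← ofReal_integral_eq_lintegral_ofReal hVint (ae_of_all _ fun s => hV0 _),
        ← ENNReal.ofReal_mul (by positivity : (0 : ℝ) ≤ 2 * √π)]
  exact (norm_integral_le_lintegral_norm _).trans (ENNReal.toReal_le_of_le_ofReal
    (mul_nonneg (by positivity) (setIntegral_nonneg measurableSet_Ioi fun s _ => hV0 _)) hlint)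

noncomputable def dualJostTerm (κ : ℝ) (u ξ : ℝ × ℝ → ℝ) (x : ℝ × ℝ) : ℝ :=
  1 / (2 * √π) * ∫ y in {y : ℝ × ℝ | x.2 < y.2}, dualJostKernel κ x y * u y * ξ y

lemma abs_dualJostTerm_le (κ : ℝ) {u ξ : ℝ × ℝ → ℝ} {U : ℝ → ℝ} {C : ℝ} (hU : Measurable U)
    (hu : ∀ y, |u y| ≤ U y.2) (hξ : ∀ y, |ξ y| ≤ C) (x : ℝ × ℝ)
    (hUint : IntegrableOn (fun s => U (x.2 + s)) (Ioi 0)) :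
    |dualJostTerm κ u ξ x| ≤ (∫ s in Ioi 0, U (x.2 + s)) * C := by
  have hC : 0 ≤ C := (abs_nonneg _).trans (hξ 0)
  have huξ : ∀ y, |u y * ξ y| ≤ U y.2 * C := fun y => by
    rw [abs_mul]
    exact mul_le_mul (hu y) (hξ y) (abs_nonneg _) ((abs_nonneg _).trans (hu y))
  have hbound := abs_setIntegral_dualJostKernel_mul_le κ x (hU.mul_const C) huξ
    (hUint.mul_const C)
  simp only [integral_mul_const, ← mul_assoc] at hbound
  rw [dualJostTerm, abs_mul, abs_of_pos (by positivity), one_div, inv_mul_le_iff₀ (by positivity)]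
  linarith

theorem dual_jost_solution_positive_general
    (u : ℝ × ℝ → ℝ) (κ : ℝ)
    (U : ℝ → ℝ) (hUmeas : Measurable U)
    (q : ℝ) (hq : q < 1 / 2)
    (hbound : ∀ x₁ x₂ : ℝ, |u (x₁, x₂)| ≤ U x₂)
    (hUint : ∀ x₂ : ℝ, IntegrableOn (fun s => U (x₂ + s)) (Set.Ioi (0 : ℝ)))
    (hUq : ∀ x₂ : ℝ, (∫ s in Set.Ioi (0 : ℝ), U (x₂ + s)) ≤ q)
    (ξ : ℝ × ℝ → ℝ) (M : ℝ) (hξbdd : ∀ p : ℝ × ℝ, |ξ p| ≤ M)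
    (heq : ∀ x₁ x₂ : ℝ, ξ (x₁, x₂) =
      1 - (1 / (2 * Real.sqrt Real.pi)) *
        ∫ y in {y : ℝ × ℝ | x₂ < y.2},
          Real.exp (-(y.1 - x₁ + 2 * κ * (y.2 - x₂)) ^ 2 / (4 * (y.2 - x₂))) /
            Real.sqrt (y.2 - x₂) * u y * ξ y) :
    ∀ x : ℝ × ℝ, 0 < ξ x := by
  have hu : ∀ y : ℝ × ℝ, |u y| ≤ U y.2 := fun y => hbound y.1 y.2
  have hq0 : 0 ≤ q := (setIntegral_nonneg measurableSet_Ioi fun s _ =>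
    (abs_nonneg _).trans (hu (0, _))).trans (hUq 0)
  have hsol : ∀ x, ξ x = 1 - dualJostTerm κ u ξ x := fun x => heq x.1 x.2
  set S := ⨆ p, |ξ p|
  have hS : ∀ p, |ξ p| ≤ S := le_ciSup ⟨M, forall_mem_range.2 hξbdd⟩
  have hterm : ∀ x, |dualJostTerm κ u ξ x| ≤ q * S := fun x =>
    (abs_dualJostTerm_le κ hUmeas hu hS x (hUint x.2)).trans
      (mul_le_mul_of_nonneg_right (hUq x.2) ((abs_nonneg _).trans (hS 0)))
  have hS_le : S ≤ 1 + q * S := ciSup_le fun p => by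
    rw [hsol p]
    exact (abs_sub _ _).trans (by rw [abs_one]; linarith [hterm p])
  intro x
  rw [hsol x]
  -- `S ≤ 1 + q S` gives `q S ≤ q / (1 - q) < 1`
  nlinarith [abs_le.1 (hterm x), (abs_nonneg _).trans (hS 0)]

/-- Let `u : ℝ² → ℝ` be continuous and `κ ∈ ℝ`. Suppose there are a
measurable function `U : ℝ → [0,∞)` and a constant `q < 1/2` with `|u(x₁,x₂)| ≤ U x₂`
for all `(x₁,x₂)` and `∫₀^∞ U (x₂ + s) ds ≤ q` for all `x₂`. Then every bounded continuous
solution `ξ` of the dual modified Jost integral equation at spectral parameter `k = iκ`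
satisfies `ξ x > 0` everywhere. -/
theorem dual_jost_solution_positive
    (u : ℝ × ℝ → ℝ) (hu : Continuous u) (κ : ℝ)
    (U : ℝ → ℝ) (hUmeas : Measurable U) (hUnn : ∀ t, 0 ≤ U t)
    (q : ℝ) (hq : q < 1 / 2)
    (hbound : ∀ x₁ x₂ : ℝ, |u (x₁, x₂)| ≤ U x₂)
    (hUint : ∀ x₂ : ℝ, IntegrableOn (fun s => U (x₂ + s)) (Set.Ioi (0 : ℝ)))
    (hUq : ∀ x₂ : ℝ, (∫ s in Set.Ioi (0 : ℝ), U (x₂ + s)) ≤ q)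
    (ξ : ℝ × ℝ → ℝ) (hξcont : Continuous ξ) (M : ℝ) (hξbdd : ∀ p : ℝ × ℝ, |ξ p| ≤ M)
    (hint : ∀ x₁ x₂ : ℝ, IntegrableOn
      (fun y : ℝ × ℝ =>
        Real.exp (-(y.1 - x₁ + 2 * κ * (y.2 - x₂)) ^ 2 / (4 * (y.2 - x₂))) /
          Real.sqrt (y.2 - x₂) * u y * ξ y)
      {y : ℝ × ℝ | x₂ < y.2})
    (heq : ∀ x₁ x₂ : ℝ, ξ (x₁, x₂) =
      1 - (1 / (2 * Real.sqrt Real.pi)) *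
        ∫ y in {y : ℝ × ℝ | x₂ < y.2},
          Real.exp (-(y.1 - x₁ + 2 * κ * (y.2 - x₂)) ^ 2 / (4 * (y.2 - x₂))) /
            Real.sqrt (y.2 - x₂) * u y * ξ y) :
    ∀ x : ℝ × ℝ, 0 < ξ x :=
  dual_jost_solution_positive_general u κ U hUmeas q hq hbound hUint hUq ξ M hξbdd heq
end

section
/- Let u : ℝ² → ℝ be measurable, κ ∈ ℝ, and q < 1 a constant such that for every (x₁,x₂) ∈ ℝ² the quantity a(x₁,x₂) := ∫_{−∞}^{x₂} ∫_ℝ (x₂−y₂)^{−1/2} exp(−(x₁−y₁+2κ(x₂−y₂))²/(4(x₂−y₂))) |u(y₁,y₂)| dy₁ dy₂ satisfies a(x₁,x₂)/(2√π) ≤ q. Then every bounded continuous solution χ of the modified Jost integral equation at spectral parameter k = iκ satisfies |χ(x₁,x₂) − 1| ≤ q/(1−q) for all (x₁,x₂) ∈ ℝ². -/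
open MeasureTheory Filter Set

/-- Let `u : ℝ² → ℝ` be measurable, `κ ∈ ℝ`, and `q < 1` such that the
quantity `a(x₁,x₂) = ∫∫_{y₂ < x₂} (x₂-y₂)^{-1/2} exp(-(x₁-y₁+2κ(x₂-y₂))²/(4(x₂-y₂))) |u(y)| dy`
satisfies `a(x₁,x₂)/(2√π) ≤ q` everywhere. Then every bounded continuous solution `χ` of the
modified Jost integral equation at spectral parameter `k = iκ` satisfies
`|χ(x₁,x₂) - 1| ≤ q/(1-q)` everywhere. -/
theorem jost_solution_one_bound
    (u : ℝ × ℝ → ℝ) (hu : Measurable u) (κ : ℝ) (q : ℝ) (hq : q < 1)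
    (hinta : ∀ x₁ x₂ : ℝ, IntegrableOn
      (fun y : ℝ × ℝ =>
        Real.exp (-(x₁ - y.1 + 2 * κ * (x₂ - y.2)) ^ 2 / (4 * (x₂ - y.2))) /
          Real.sqrt (x₂ - y.2) * |u y|)
      {y : ℝ × ℝ | y.2 < x₂})
    (ha : ∀ x₁ x₂ : ℝ,
      (∫ y in {y : ℝ × ℝ | y.2 < x₂},
          Real.exp (-(x₁ - y.1 + 2 * κ * (x₂ - y.2)) ^ 2 / (4 * (x₂ - y.2))) /
            Real.sqrt (x₂ - y.2) * |u y|) / (2 * Real.sqrt Real.pi) ≤ q)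
    (χ : ℝ × ℝ → ℝ) (hχcont : Continuous χ) (M : ℝ) (hχbdd : ∀ p : ℝ × ℝ, |χ p| ≤ M)
    (hint : ∀ x₁ x₂ : ℝ, IntegrableOn
      (fun y : ℝ × ℝ =>
        Real.exp (-(x₁ - y.1 + 2 * κ * (x₂ - y.2)) ^ 2 / (4 * (x₂ - y.2))) /
          Real.sqrt (x₂ - y.2) * u y * χ y)
      {y : ℝ × ℝ | y.2 < x₂})
    (heq : ∀ x₁ x₂ : ℝ, χ (x₁, x₂) =
      1 - (1 / (2 * Real.sqrt Real.pi)) *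
        ∫ y in {y : ℝ × ℝ | y.2 < x₂},
          Real.exp (-(x₁ - y.1 + 2 * κ * (x₂ - y.2)) ^ 2 / (4 * (x₂ - y.2))) /
            Real.sqrt (x₂ - y.2) * u y * χ y) :
    ∀ x : ℝ × ℝ, |χ x - 1| ≤ q / (1 - q) := by
  have hπ : (0:ℝ) < 2 * Real.sqrt Real.pi := by positivity
  have hq0 : 0 ≤ q := by
    refine le_trans ?_ (ha 0 0)
    apply div_nonneg _ hπ.le
    exact integral_nonneg fun y => by positivity
  set S := sSup (Set.range fun p : ℝ × ℝ => |χ p - 1|) with hSdef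
  have hbdd : BddAbove (Set.range fun p : ℝ × ℝ => |χ p - 1|) := by
    refine ⟨M + 1, ?_⟩
    rintro _ ⟨p, rfl⟩
    calc |χ p - 1| ≤ |χ p| + |(1:ℝ)| := abs_sub _ _
    _ ≤ M + 1 := by have := hχbdd p; simp only [abs_one]; linarith
  have hle : ∀ p : ℝ × ℝ, |χ p - 1| ≤ S := fun p => le_csSup hbdd ⟨p, rfl⟩
  have hS0 : 0 ≤ S := le_trans (abs_nonneg _) (hle (0, 0))
  have key : ∀ p : ℝ × ℝ, |χ p - 1| ≤ q * (1 + S) := by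
    rintro ⟨x₁, x₂⟩
    rw [heq x₁ x₂]
    have habs : |(1:ℝ) - (1 / (2 * Real.sqrt Real.pi)) *
        (∫ y in {y : ℝ × ℝ | y.2 < x₂},
          Real.exp (-(x₁ - y.1 + 2 * κ * (x₂ - y.2)) ^ 2 / (4 * (x₂ - y.2))) /
            Real.sqrt (x₂ - y.2) * u y * χ y) - 1| =
        (1 / (2 * Real.sqrt Real.pi)) *
        |∫ y in {y : ℝ × ℝ | y.2 < x₂},
          Real.exp (-(x₁ - y.1 + 2 * κ * (x₂ - y.2)) ^ 2 / (4 * (x₂ - y.2))) /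
            Real.sqrt (x₂ - y.2) * u y * χ y| := by
      rw [sub_sub_cancel_left, abs_neg, abs_mul, abs_of_pos (by positivity)]
    rw [habs]
    have hIbound : |∫ y in {y : ℝ × ℝ | y.2 < x₂},
          Real.exp (-(x₁ - y.1 + 2 * κ * (x₂ - y.2)) ^ 2 / (4 * (x₂ - y.2))) /
            Real.sqrt (x₂ - y.2) * u y * χ y| ≤
        ∫ y in {y : ℝ × ℝ | y.2 < x₂},
          Real.exp (-(x₁ - y.1 + 2 * κ * (x₂ - y.2)) ^ 2 / (4 * (x₂ - y.2))) /
            Real.sqrt (x₂ - y.2) * |u y| * (1 + S) := by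
      rw [← Real.norm_eq_abs]
      refine norm_integral_le_of_norm_le ((hinta x₁ x₂).mul_const (1 + S)) ?_
      refine Eventually.of_forall fun y => ?_
      rw [Real.norm_eq_abs, abs_mul, abs_mul]
      have hK : |Real.exp (-(x₁ - y.1 + 2 * κ * (x₂ - y.2)) ^ 2 / (4 * (x₂ - y.2))) /
          Real.sqrt (x₂ - y.2)| =
          Real.exp (-(x₁ - y.1 + 2 * κ * (x₂ - y.2)) ^ 2 / (4 * (x₂ - y.2))) /
          Real.sqrt (x₂ - y.2) := abs_of_nonneg (by positivity)
      rw [hK]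
      have hχy : |χ y| ≤ 1 + S := by
        have := hle y
        calc |χ y| = |χ y - 1 + 1| := by ring_nf
        _ ≤ |χ y - 1| + |(1:ℝ)| := abs_add_le _ _
        _ ≤ 1 + S := by simp only [abs_one]; linarith
      have hKnn : (0:ℝ) ≤ Real.exp (-(x₁ - y.1 + 2 * κ * (x₂ - y.2)) ^ 2 / (4 * (x₂ - y.2))) /
          Real.sqrt (x₂ - y.2) := by positivity
      exact mul_le_mul_of_nonneg_left hχy (by positivity)
    have hInt : ∫ y in {y : ℝ × ℝ | y.2 < x₂},
          Real.exp (-(x₁ - y.1 + 2 * κ * (x₂ - y.2)) ^ 2 / (4 * (x₂ - y.2))) /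
            Real.sqrt (x₂ - y.2) * |u y| * (1 + S) =
        (∫ y in {y : ℝ × ℝ | y.2 < x₂},
          Real.exp (-(x₁ - y.1 + 2 * κ * (x₂ - y.2)) ^ 2 / (4 * (x₂ - y.2))) /
            Real.sqrt (x₂ - y.2) * |u y|) * (1 + S) := by rw [MeasureTheory.integral_mul_const]
    have haq : (∫ y in {y : ℝ × ℝ | y.2 < x₂},
          Real.exp (-(x₁ - y.1 + 2 * κ * (x₂ - y.2)) ^ 2 / (4 * (x₂ - y.2))) /
            Real.sqrt (x₂ - y.2) * |u y|) ≤ q * (2 * Real.sqrt Real.pi) :=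
      (div_le_iff₀ hπ).mp (ha x₁ x₂)
    calc (1 / (2 * Real.sqrt Real.pi)) *
        |∫ y in {y : ℝ × ℝ | y.2 < x₂},
          Real.exp (-(x₁ - y.1 + 2 * κ * (x₂ - y.2)) ^ 2 / (4 * (x₂ - y.2))) /
            Real.sqrt (x₂ - y.2) * u y * χ y|
        ≤ (1 / (2 * Real.sqrt Real.pi)) *
          ((∫ y in {y : ℝ × ℝ | y.2 < x₂},
          Real.exp (-(x₁ - y.1 + 2 * κ * (x₂ - y.2)) ^ 2 / (4 * (x₂ - y.2))) /
            Real.sqrt (x₂ - y.2) * |u y|) * (1 + S)) := by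
          rw [← hInt]; exact mul_le_mul_of_nonneg_left hIbound (by positivity)
    _ ≤ (1 / (2 * Real.sqrt Real.pi)) * (q * (2 * Real.sqrt Real.pi) * (1 + S)) := by
          refine mul_le_mul_of_nonneg_left ?_ (by positivity)
          exact mul_le_mul_of_nonneg_right haq (by linarith)
    _ = q * (1 + S) := by field_simp
  have hSle : S ≤ q * (1 + S) := by
    refine csSup_le ⟨|χ (0,0) - 1|, ⟨(0,0), rfl⟩⟩ ?_
    rintro _ ⟨p, rfl⟩
    exact key p
  have hSq : S ≤ q / (1 - q) := by
    rw [le_div_iff₀ (by linarith)]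
    nlinarith
  intro x
  exact le_trans (hle x) hSq
end

section
/- Let u : ℝ² → ℝ, let φ : ℝ² → ℝ be a smooth nowhere-vanishing solution of the heat conduction equation with potential u, and let f : ℝ² → ℂ be a smooth solution of the heat conduction equation with potential u. Define the Bäcklund-transformed potential u′ = u − 2∂_{x₁}²(log |φ|) and the Darboux transform f′ = ∂_{x₁}f − (∂_{x₁}φ/φ)·f. Then f′ solves the heat conduction equation with potential u′. -/
open MeasureTheory Filter Set

/-- Partial derivative with respect to the first coordinate on `ℝ²`. -/
noncomputable def D1 {E : Type*} [NormedAddCommGroup E] [NormedSpace ℝ E]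
    (f : ℝ × ℝ → E) (x : ℝ × ℝ) : E :=
  deriv (fun t => f (t, x.2)) x.1

/-- Partial derivative with respect to the second coordinate on `ℝ²`. -/
noncomputable def D2 {E : Type*} [NormedAddCommGroup E] [NormedSpace ℝ E]
    (f : ℝ × ℝ → E) (x : ℝ × ℝ) : E :=
  deriv (fun t => f (x.1, t)) x.2

section Helpers

variable {E : Type*} [NormedAddCommGroup E] [NormedSpace ℝ E]

lemma hasDerivAt_line1 {g : ℝ × ℝ → E} {x : ℝ × ℝ} (hg : DifferentiableAt ℝ g x) :
    HasDerivAt (fun t => g (t, x.2)) (fderiv ℝ g x ((1 : ℝ), (0 : ℝ))) x.1 := by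
  have h := hg.hasFDerivAt.comp_hasDerivAt_of_eq x.1
    ((hasDerivAt_id x.1).prodMk (hasDerivAt_const x.1 x.2)) (by simp)
  simpa [Function.comp_def] using h

lemma hasDerivAt_line2 {g : ℝ × ℝ → E} {x : ℝ × ℝ} (hg : DifferentiableAt ℝ g x) :
    HasDerivAt (fun t => g (x.1, t)) (fderiv ℝ g x ((0 : ℝ), (1 : ℝ))) x.2 := by
  have h := hg.hasFDerivAt.comp_hasDerivAt_of_eq x.2
    ((hasDerivAt_const x.2 x.1).prodMk (hasDerivAt_id x.2)) (by simp)
  simpa [Function.comp_def] using h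

lemma D1_eq_fderiv {g : ℝ × ℝ → E} {x : ℝ × ℝ} (hg : DifferentiableAt ℝ g x) :
    D1 g x = fderiv ℝ g x ((1 : ℝ), (0 : ℝ)) := (hasDerivAt_line1 hg).deriv

lemma D2_eq_fderiv {g : ℝ × ℝ → E} {x : ℝ × ℝ} (hg : DifferentiableAt ℝ g x) :
    D2 g x = fderiv ℝ g x ((0 : ℝ), (1 : ℝ)) := (hasDerivAt_line2 hg).deriv

lemma hasDerivAt_D1 {g : ℝ × ℝ → E} {x : ℝ × ℝ} (hg : DifferentiableAt ℝ g x) :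
    HasDerivAt (fun t => g (t, x.2)) (D1 g x) x.1 := by
  rw [D1_eq_fderiv hg]; exact hasDerivAt_line1 hg

lemma hasDerivAt_D2 {g : ℝ × ℝ → E} {x : ℝ × ℝ} (hg : DifferentiableAt ℝ g x) :
    HasDerivAt (fun t => g (x.1, t)) (D2 g x) x.2 := by
  rw [D2_eq_fderiv hg]; exact hasDerivAt_line2 hg

lemma contDiff_D1 {g : ℝ × ℝ → E} (hg : ContDiff ℝ (⊤ : ℕ∞) g) : ContDiff ℝ (⊤ : ℕ∞) (D1 g) := by
  have h : D1 g = fun x => fderiv ℝ g x ((1 : ℝ), (0 : ℝ)) :=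
    funext fun x => D1_eq_fderiv (hg.differentiable (by simp) x)
  rw [h]
  exact (hg.fderiv_right (by simp)).clm_apply contDiff_const

lemma contDiff_D2 {g : ℝ × ℝ → E} (hg : ContDiff ℝ (⊤ : ℕ∞) g) : ContDiff ℝ (⊤ : ℕ∞) (D2 g) := by
  have h : D2 g = fun x => fderiv ℝ g x ((0 : ℝ), (1 : ℝ)) :=
    funext fun x => D2_eq_fderiv (hg.differentiable (by simp) x)
  rw [h]
  exact (hg.fderiv_right (by simp)).clm_apply contDiff_const

lemma clairaut {g : ℝ × ℝ → E} (hg : ContDiff ℝ (⊤ : ℕ∞) g) (x : ℝ × ℝ) :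
    D2 (D1 g) x = D1 (D2 g) x := by
  have hd : Differentiable ℝ g := hg.differentiable (by simp)
  have hd' : Differentiable ℝ (fderiv ℝ g) := (hg.fderiv_right (m := (⊤ : ℕ∞)) (by simp)).differentiable (by simp)
  have hsym := second_derivative_symmetric (fun y => (hd y).hasFDerivAt)
    ((hd' x).hasFDerivAt ) ((1:ℝ), (0:ℝ)) ((0:ℝ), (1:ℝ))
  have h1 : D1 g = fun y => fderiv ℝ g y ((1 : ℝ), (0 : ℝ)) :=
    funext fun y => D1_eq_fderiv (hd y)
  have h2 : D2 g = fun y => fderiv ℝ g y ((0 : ℝ), (1 : ℝ)) :=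
    funext fun y => D2_eq_fderiv (hd y)
  have e1 : D2 (D1 g) x = fderiv ℝ (fderiv ℝ g) x ((0:ℝ),(1:ℝ)) ((1:ℝ),(0:ℝ)) := by
    rw [h1]
    have hc := (hd' x).hasFDerivAt.clm_apply (hasFDerivAt_const ((1:ℝ),(0:ℝ)) x)
    rw [D2_eq_fderiv hc.differentiableAt, hc.fderiv]
    simp
  have e2 : D1 (D2 g) x = fderiv ℝ (fderiv ℝ g) x ((1:ℝ),(0:ℝ)) ((0:ℝ),(1:ℝ)) := by
    rw [h2]
    have hc := (hd' x).hasFDerivAt.clm_apply (hasFDerivAt_const ((0:ℝ),(1:ℝ)) x)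
    rw [D1_eq_fderiv hc.differentiableAt, hc.fderiv]
    simp
  rw [e1, e2, hsym]

end Helpers

/-- If `φ` is a smooth nowhere-vanishing solution of the heat conduction
equation with potential `u` and `f` a smooth solution of the same equation, then the Darboux
transform `f' = ∂₁f - (∂₁φ/φ)·f` solves the heat conduction equation with the
Bäcklund-transformed potential `u' = u - 2∂₁² log |φ|`. -/
theorem darboux_transform_elementary (u : ℝ × ℝ → ℝ) (φ : ℝ × ℝ → ℝ) (f : ℝ × ℝ → ℂ)
    (hφ : ContDiff ℝ (⊤ : ℕ∞) φ) (hφ0 : ∀ x, φ x ≠ 0)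
    (hφeq : ∀ x : ℝ × ℝ, -D2 φ x + D1 (D1 φ) x - u x * φ x = 0)
    (hf : ContDiff ℝ (⊤ : ℕ∞) f)
    (hfeq : ∀ x : ℝ × ℝ, -D2 f x + D1 (D1 f) x - (u x : ℂ) * f x = 0)
    (u' : ℝ × ℝ → ℝ)
    (hu' : ∀ x : ℝ × ℝ, u' x = u x - 2 * D1 (D1 (fun y => Real.log |φ y|)) x)
    (f' : ℝ × ℝ → ℂ)
    (hf' : ∀ x : ℝ × ℝ, f' x = D1 f x - ((D1 φ x / φ x : ℝ) : ℂ) * f x) :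
    ∀ x : ℝ × ℝ, -D2 f' x + D1 (D1 f') x - (u' x : ℂ) * f' x = 0 := by
  -- differentiability facts
  have dφ : Differentiable ℝ φ := hφ.differentiable (by simp)
  have cφ1 : ContDiff ℝ (⊤ : ℕ∞) (D1 φ) := contDiff_D1 hφ
  have dφ1 : Differentiable ℝ (D1 φ) := cφ1.differentiable (by simp)
  have cφ11 : ContDiff ℝ (⊤ : ℕ∞) (D1 (D1 φ)) := contDiff_D1 cφ1
  have dφ11 : Differentiable ℝ (D1 (D1 φ)) := cφ11.differentiable (by simp)
  have cφ2 : ContDiff ℝ (⊤ : ℕ∞) (D2 φ) := contDiff_D2 hφ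
  have dφ2 : Differentiable ℝ (D2 φ) := cφ2.differentiable (by simp)
  have df : Differentiable ℝ f := hf.differentiable (by simp)
  have cf1 : ContDiff ℝ (⊤ : ℕ∞) (D1 f) := contDiff_D1 hf
  have df1 : Differentiable ℝ (D1 f) := cf1.differentiable (by simp)
  have cf11 : ContDiff ℝ (⊤ : ℕ∞) (D1 (D1 f)) := contDiff_D1 cf1
  have df11 : Differentiable ℝ (D1 (D1 f)) := cf11.differentiable (by simp)
  have cw : ContDiff ℝ (⊤ : ℕ∞) (fun y => D1 φ y / φ y) := cφ1.div hφ hφ0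
  have dw : Differentiable ℝ (fun y => D1 φ y / φ y) := cw.differentiable (by simp)
  have cw1 : ContDiff ℝ (⊤ : ℕ∞) (D1 (fun y => D1 φ y / φ y)) := contDiff_D1 cw
  have dw1 : Differentiable ℝ (D1 (fun y => D1 φ y / φ y)) := cw1.differentiable (by simp)
  have cU : ContDiff ℝ (⊤ : ℕ∞) (fun y => (D1 (D1 φ) y - D2 φ y) / φ y) := (cφ11.sub cφ2).div hφ hφ0
  have dU : Differentiable ℝ (fun y => (D1 (D1 φ) y - D2 φ y) / φ y) := cU.differentiable (by simp)
  -- the potential u in terms of φ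
  have huU : ∀ y, u y = (D1 (D1 φ) y - D2 φ y) / φ y := by
    intro y
    have h := hφeq y
    rw [eq_div_iff (hφ0 y)]
    linarith
  -- heat equation for f, rewritten
  have hfeq2 : ∀ y, D2 f y =
      D1 (D1 f) y - (((D1 (D1 φ) y - D2 φ y) / φ y : ℝ) : ℂ) * f y := by
    intro y
    have h := hfeq y
    rw [huU y] at h
    linear_combination -h
  have hD2ffun : D2 f = fun y =>
      D1 (D1 f) y - (((D1 (D1 φ) y - D2 φ y) / φ y : ℝ) : ℂ) * f y := funext hfeq2
  -- derivative of log |φ|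
  have hφw : ∀ y, D1 (fun y => Real.log |φ y|) y = D1 φ y / φ y := by
    intro y
    have hl : (fun y => Real.log |φ y|) = fun y => Real.log (φ y) :=
      funext fun z => Real.log_abs _
    rw [hl]
    exact ((hasDerivAt_D1 (dφ y)).log (hφ0 y)).deriv
  have hDlog : D1 (fun y => Real.log |φ y|) = fun y => D1 φ y / φ y := funext hφw
  -- first derivative of w = D1 φ / φ
  have hwD1 : ∀ y, D1 (fun y => D1 φ y / φ y) y =
      (D1 (D1 φ) y * φ y - D1 φ y * D1 φ y) / φ y ^ 2 := fun y =>
    ((hasDerivAt_D1 (dφ1 y)).div (hasDerivAt_D1 (dφ y)) (hφ0 y)).deriv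
  have hwD1fun : D1 (fun y => D1 φ y / φ y) =
      fun y => (D1 (D1 φ) y * φ y - D1 φ y * D1 φ y) / φ y ^ 2 := funext hwD1
  -- f' as a function
  have hf'fun : f' = fun y => D1 f y - ((D1 φ y / φ y : ℝ) : ℂ) * f y := funext hf'
  intro x
  -- key computations at the point x
  have key5 : D1 (D1 (fun y => D1 φ y / φ y)) x =
      ((D1 (D1 (D1 φ)) x * φ x + D1 (D1 φ) x * D1 φ x
          - (D1 (D1 φ) x * D1 φ x + D1 φ x * D1 (D1 φ) x)) * φ x ^ 2
        - (D1 (D1 φ) x * φ x - D1 φ x * D1 φ x) * (2 * φ x * D1 φ x)) / (φ x ^ 2) ^ 2 := by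
    rw [hwD1fun]
    exact ((((hasDerivAt_D1 (dφ11 x)).mul (hasDerivAt_D1 (dφ x))).sub
      ((hasDerivAt_D1 (dφ1 x)).mul (hasDerivAt_D1 (dφ1 x)))).div
      ((hasDerivAt_D1 (dφ x)).pow 2) (pow_ne_zero 2 (hφ0 x))).deriv.trans
      (by simp only [Pi.pow_apply, Pi.mul_apply, Pi.sub_apply, Prod.mk.eta]; ring)
  have keyD2w : D2 (fun y => D1 φ y / φ y) x =
      (D1 (D2 φ) x * φ x - D1 φ x * D2 φ x) / φ x ^ 2 :=
    ((hasDerivAt_D2 (dφ1 x)).div (hasDerivAt_D2 (dφ x)) (hφ0 x)).deriv.trans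
      (by rw [clairaut hφ x])
  have keyU : D1 (fun y => (D1 (D1 φ) y - D2 φ y) / φ y) x =
      ((D1 (D1 (D1 φ)) x - D1 (D2 φ) x) * φ x
        - (D1 (D1 φ) x - D2 φ x) * D1 φ x) / φ x ^ 2 :=
    (((hasDerivAt_D1 (dφ11 x)).sub (hasDerivAt_D1 (dφ2 x))).div
      (hasDerivAt_D1 (dφ x)) (hφ0 x)).deriv
  -- first derivative of f'
  have step1 : ∀ y, D1 f' y = D1 (D1 f) y
      - (((D1 (fun y => D1 φ y / φ y) y : ℝ) : ℂ) * f y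
        + ((D1 φ y / φ y : ℝ) : ℂ) * D1 f y) := by
    intro y
    rw [hf'fun]
    exact ((hasDerivAt_D1 (df1 y)).sub
      (((hasDerivAt_D1 (dw y)).ofReal_comp).mul (hasDerivAt_D1 (df y)))).deriv
  have hD1f'fun : D1 f' = fun y => D1 (D1 f) y
      - (((D1 (fun y => D1 φ y / φ y) y : ℝ) : ℂ) * f y
        + ((D1 φ y / φ y : ℝ) : ℂ) * D1 f y) := funext step1
  -- second x₁-derivative of f'
  have key2 : D1 (D1 f') x = D1 (D1 (D1 f)) x
      - (((D1 (D1 (fun y => D1 φ y / φ y)) x : ℝ) : ℂ) * f x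
          + ((D1 (fun y => D1 φ y / φ y) x : ℝ) : ℂ) * D1 f x
        + (((D1 (fun y => D1 φ y / φ y) x : ℝ) : ℂ) * D1 f x
          + ((D1 φ x / φ x : ℝ) : ℂ) * D1 (D1 f) x)) := by
    rw [hD1f'fun]
    exact ((hasDerivAt_D1 (df11 x)).sub
      (((((hasDerivAt_D1 (dw1 x)).ofReal_comp).mul (hasDerivAt_D1 (df x)))).add
        ((((hasDerivAt_D1 (dw x)).ofReal_comp).mul (hasDerivAt_D1 (df1 x)))))).deriv
  -- x₂-derivative of f'
  have key3 : D2 f' x = D2 (D1 f) x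
      - (((D2 (fun y => D1 φ y / φ y) x : ℝ) : ℂ) * f x
        + ((D1 φ x / φ x : ℝ) : ℂ) * D2 f x) := by
    rw [hf'fun]
    exact ((hasDerivAt_D2 (df1 x)).sub
      (((hasDerivAt_D2 (dw x)).ofReal_comp).mul (hasDerivAt_D2 (df x)))).deriv
  -- mixed derivative of f via the heat equation
  have key4 : D1 (D2 f) x = D1 (D1 (D1 f)) x
      - (((D1 (fun y => (D1 (D1 φ) y - D2 φ y) / φ y) x : ℝ) : ℂ) * f x
        + (((D1 (D1 φ) x - D2 φ x) / φ x : ℝ) : ℂ) * D1 f x) := by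
    rw [hD2ffun]
    exact ((hasDerivAt_D1 (df11 x)).sub
      (((hasDerivAt_D1 (dU x)).ofReal_comp).mul (hasDerivAt_D1 (df x)))).deriv
  -- assemble
  have hφc : (φ x : ℂ) ≠ 0 := by exact_mod_cast hφ0 x
  rw [hu' x, huU x, hf' x, hDlog, key3, clairaut hf x, key4, key2, keyU, key5, keyD2w,
    hfeq2 x, hwD1 x]
  push_cast
  ring_nf
  field_simp [hφc]
  ring
end

section
/- Let u : ℝ² → ℝ, let φ : ℝ² → ℝ be a smooth solution of the heat conduction equation with potential u, let ψ : ℝ² → ℝ be a smooth solution of the dual heat conduction equation with potential u, and let Δ : ℝ² → ℝ be a smooth nowhere-vanishing function satisfying ∂_{x₁}Δ = φ·ψ and ∂_{x₂}Δ = −(φ·∂_{x₁}ψ − ψ·∂_{x₁}φ). Then a₁ := φ/Δ solves the heat conduction equation with the binary-Bäcklund-transformed potential u₁ = u − 2∂_{x₁}²(log |Δ|). -/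
open MeasureTheory Filter Set

/-- If `φ` solves the heat equation with potential `u`, `ψ` solves the
dual equation, and the nowhere-vanishing `Δ` satisfies `∂₁Δ = φψ`,
`∂₂Δ = -(φ∂₁ψ - ψ∂₁φ)`, then `a₁ = φ/Δ` solves the heat equation with the
binary-Bäcklund-transformed potential `u₁ = u - 2∂₁² log |Δ|`. -/
theorem binary_backlund_a1 (u : ℝ × ℝ → ℝ) (φ ψ Δ : ℝ × ℝ → ℝ)
    (hφ : ContDiff ℝ (⊤ : ℕ∞) φ)
    (hφeq : ∀ x : ℝ × ℝ, -D2 φ x + D1 (D1 φ) x - u x * φ x = 0)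
    (hψ : ContDiff ℝ (⊤ : ℕ∞) ψ)
    (hψeq : ∀ x : ℝ × ℝ, D2 ψ x + D1 (D1 ψ) x - u x * ψ x = 0)
    (hΔ : ContDiff ℝ (⊤ : ℕ∞) Δ) (hΔ0 : ∀ x, Δ x ≠ 0)
    (hΔ1 : ∀ x : ℝ × ℝ, D1 Δ x = φ x * ψ x)
    (hΔ2 : ∀ x : ℝ × ℝ, D2 Δ x = -(φ x * D1 ψ x - ψ x * D1 φ x))
    (u₁ : ℝ × ℝ → ℝ)
    (hu₁ : ∀ x : ℝ × ℝ, u₁ x = u x - 2 * D1 (D1 (fun y => Real.log |Δ y|)) x) :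
    ∀ x : ℝ × ℝ,
      -D2 (fun y => φ y / Δ y) x + D1 (D1 (fun y => φ y / Δ y)) x -
        u₁ x * (φ x / Δ x) = 0 := by
  rintro ⟨a, b⟩
  -- horizontal line restrictions
  have hφline : ContDiff ℝ (⊤ : ℕ∞) (fun t : ℝ => φ (t, b)) :=
    hφ.comp (contDiff_id.prodMk contDiff_const)
  have hψline : ContDiff ℝ (⊤ : ℕ∞) (fun t : ℝ => ψ (t, b)) :=
    hψ.comp (contDiff_id.prodMk contDiff_const)
  have hΔline : ContDiff ℝ (⊤ : ℕ∞) (fun t : ℝ => Δ (t, b)) :=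
    hΔ.comp (contDiff_id.prodMk contDiff_const)
  have hF' : ∀ t : ℝ, HasDerivAt (fun s => φ (s, b)) (D1 φ (t, b)) t :=
    fun t => ((hφline.differentiable (by simp)) t).hasDerivAt
  have hG' : ∀ t : ℝ, HasDerivAt (fun s => ψ (s, b)) (D1 ψ (t, b)) t :=
    fun t => ((hψline.differentiable (by simp)) t).hasDerivAt
  have hH' : ∀ t : ℝ, HasDerivAt (fun s => Δ (s, b)) (D1 Δ (t, b)) t :=
    fun t => ((hΔline.differentiable (by simp)) t).hasDerivAt
  have hF'' : ∀ t : ℝ, HasDerivAt (fun s => D1 φ (s, b)) (D1 (D1 φ) (t, b)) t :=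
    fun t => (((contDiff_infty_iff_deriv.mp (hφline.of_le (by simp))).2.differentiable (by simp)) t).hasDerivAt
  -- vertical line restrictions
  have hφv : ∀ t : ℝ, HasDerivAt (fun s => φ (a, s)) (D2 φ (a, t)) t :=
    fun t => (((hφ.comp (contDiff_const.prodMk contDiff_id)).differentiable (by simp)) t).hasDerivAt
  have hΔv : ∀ t : ℝ, HasDerivAt (fun s => Δ (a, s)) (D2 Δ (a, t)) t :=
    fun t => (((hΔ.comp (contDiff_const.prodMk contDiff_id)).differentiable (by simp)) t).hasDerivAt
  -- D2 of the quotient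
  have hD2q : D2 (fun y => φ y / Δ y) (a, b) =
      (D2 φ (a, b) * Δ (a, b) - φ (a, b) * D2 Δ (a, b)) / Δ (a, b) ^ 2 := by
    show deriv (fun t => φ (a, t) / Δ (a, t)) b = _
    exact ((hφv b).div (hΔv b) (hΔ0 (a, b))).deriv
  -- first D1 of the quotient, pointwise along the line
  have hq : ∀ t : ℝ, D1 (fun y => φ y / Δ y) (t, b) =
      (D1 φ (t, b) * Δ (t, b) - φ (t, b) * (φ (t, b) * ψ (t, b))) / Δ (t, b) ^ 2 := by
    intro t
    show deriv (fun s => φ (s, b) / Δ (s, b)) t = _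
    rw [((hF' t).fun_div (hH' t) (hΔ0 (t, b))).deriv, hΔ1]
  -- derivative of that expression
  have key : HasDerivAt
      (fun t => (D1 φ (t, b) * Δ (t, b) - φ (t, b) * (φ (t, b) * ψ (t, b))) / Δ (t, b) ^ 2)
      ((((D1 (D1 φ) (a, b) * Δ (a, b) + D1 φ (a, b) * D1 Δ (a, b)) -
          (D1 φ (a, b) * (φ (a, b) * ψ (a, b)) +
            φ (a, b) * (D1 φ (a, b) * ψ (a, b) + φ (a, b) * D1 ψ (a, b)))) * Δ (a, b) ^ 2 -
        (D1 φ (a, b) * Δ (a, b) - φ (a, b) * (φ (a, b) * ψ (a, b))) *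
          ((2 : ℕ) * Δ (a, b) ^ 1 * D1 Δ (a, b))) / (Δ (a, b) ^ 2) ^ 2) a := by
    exact (((hF'' a).mul (hH' a)).sub
      ((hF' a).mul ((hF' a).mul (hG' a)))).div ((hH' a).pow 2)
      (pow_ne_zero 2 (hΔ0 (a, b)))
  have hD11q : D1 (D1 (fun y => φ y / Δ y)) (a, b) =
      deriv (fun t => (D1 φ (t, b) * Δ (t, b) - φ (t, b) * (φ (t, b) * ψ (t, b))) /
        Δ (t, b) ^ 2) a := by
    show deriv (fun t => D1 (fun y => φ y / Δ y) (t, b)) a = _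
    rw [show (fun t => D1 (fun y => φ y / Δ y) (t, b)) =
      fun t => (D1 φ (t, b) * Δ (t, b) - φ (t, b) * (φ (t, b) * ψ (t, b))) / Δ (t, b) ^ 2
      from funext hq]
  -- log part
  have hlq : ∀ t : ℝ, D1 (fun y => Real.log |Δ y|) (t, b) =
      φ (t, b) * ψ (t, b) / Δ (t, b) := by
    intro t
    show deriv (fun s => Real.log |Δ (s, b)|) t = _
    rw [show (fun s => Real.log |Δ (s, b)|) = fun s => Real.log (Δ (s, b)) from
      funext fun s => Real.log_abs _]
    rw [((hH' t).log (hΔ0 (t, b))).deriv, hΔ1]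
  have keylog : HasDerivAt (fun t => φ (t, b) * ψ (t, b) / Δ (t, b))
      (((D1 φ (a, b) * ψ (a, b) + φ (a, b) * D1 ψ (a, b)) * Δ (a, b) -
        φ (a, b) * ψ (a, b) * D1 Δ (a, b)) / Δ (a, b) ^ 2) a :=
    ((hF' a).mul (hG' a)).div (hH' a) (hΔ0 (a, b))
  have hD11log : D1 (D1 (fun y => Real.log |Δ y|)) (a, b) =
      deriv (fun t => φ (t, b) * ψ (t, b) / Δ (t, b)) a := by
    show deriv (fun t => D1 (fun y => Real.log |Δ y|) (t, b)) a = _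
    rw [show (fun t => D1 (fun y => Real.log |Δ y|) (t, b)) =
      fun t => φ (t, b) * ψ (t, b) / Δ (t, b) from funext hlq]
  -- heat equation for φ
  have hfe : D2 φ (a, b) = D1 (D1 φ) (a, b) - u (a, b) * φ (a, b) := by
    have := hφeq (a, b); linarith
  rw [hu₁, hD2q, hD11q, key.deriv, hD11log, keylog.deriv, hfe, hΔ1, hΔ2]
  have h0 := hΔ0 (a, b)
  field_simp
  ring
end

section
/- Let u : ℝ² → ℝ, let φ : ℝ² → ℝ be a smooth solution of the heat conduction equation with potential u, let ψ : ℝ² → ℝ be a smooth solution of the dual heat conduction equation with potential u, and let Δ : ℝ² → ℝ be a smooth nowhere-vanishing function satisfying ∂_{x₁}Δ = φ·ψ and ∂_{x₂}Δ = −(φ·∂_{x₁}ψ − ψ·∂_{x₁}φ). Then b₁ := ψ/Δ solves the dual heat conduction equation with the binary-Bäcklund-transformed potential u₁ = u − 2∂_{x₁}²(log |Δ|). -/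
open MeasureTheory Filter Set

lemma hasDerivAt_slice1 {f : ℝ × ℝ → ℝ} (hf : Differentiable ℝ f) (x : ℝ × ℝ) :
    HasDerivAt (fun t => f (t, x.2)) (D1 f x) x.1 := by
  have h : DifferentiableAt ℝ (fun t => f (t, x.2)) x.1 :=
    (hf (x.1, x.2)).comp x.1 (differentiableAt_id.prodMk (differentiableAt_const _))
  exact h.hasDerivAt

lemma hasDerivAt_slice2 {f : ℝ × ℝ → ℝ} (hf : Differentiable ℝ f) (x : ℝ × ℝ) :
    HasDerivAt (fun t => f (x.1, t)) (D2 f x) x.2 := by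
  have h : DifferentiableAt ℝ (fun t => f (x.1, t)) x.2 :=
    (hf (x.1, x.2)).comp x.2 ((differentiableAt_const _).prodMk differentiableAt_id)
  exact h.hasDerivAt

lemma D1_eq_fderiv_s13 {f : ℝ × ℝ → ℝ} (hf : Differentiable ℝ f) (x : ℝ × ℝ) :
    D1 f x = fderiv ℝ f x ((1 : ℝ), (0 : ℝ)) := by
  have hinner : HasDerivAt (fun t : ℝ => (t, x.2)) ((1 : ℝ), (0 : ℝ)) x.1 :=
    HasDerivAt.prodMk (hasDerivAt_id x.1) (hasDerivAt_const _ _)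
  have := (hf (x.1, x.2)).hasFDerivAt.comp_hasDerivAt x.1 hinner
  simpa [D1, Function.comp_def] using this.deriv

lemma contDiff_D1_s13 {f : ℝ × ℝ → ℝ} (hf : ContDiff ℝ (⊤ : ℕ∞) f) : ContDiff ℝ (⊤ : ℕ∞) (D1 f) := by
  have : D1 f = fun x => fderiv ℝ f x ((1 : ℝ), (0 : ℝ)) :=
    funext fun x => D1_eq_fderiv_s13 (hf.differentiable (by simp)) x
  rw [this]
  exact (hf.fderiv_right (by simp)).clm_apply contDiff_const

/-- If `φ` solves the heat equation with potential `u`, `ψ` solves the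
dual equation, and the nowhere-vanishing `Δ` satisfies `∂₁Δ = φψ`,
`∂₂Δ = -(φ∂₁ψ - ψ∂₁φ)`, then `b₁ = ψ/Δ` solves the dual heat equation with the
binary-Bäcklund-transformed potential `u₁ = u - 2∂₁² log |Δ|`. -/
theorem binary_backlund_b1 (u : ℝ × ℝ → ℝ) (φ ψ Δ : ℝ × ℝ → ℝ)
    (hφ : ContDiff ℝ (⊤ : ℕ∞) φ)
    (hφeq : ∀ x : ℝ × ℝ, -D2 φ x + D1 (D1 φ) x - u x * φ x = 0)
    (hψ : ContDiff ℝ (⊤ : ℕ∞) ψ)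
    (hψeq : ∀ x : ℝ × ℝ, D2 ψ x + D1 (D1 ψ) x - u x * ψ x = 0)
    (hΔ : ContDiff ℝ (⊤ : ℕ∞) Δ) (hΔ0 : ∀ x, Δ x ≠ 0)
    (hΔ1 : ∀ x : ℝ × ℝ, D1 Δ x = φ x * ψ x)
    (hΔ2 : ∀ x : ℝ × ℝ, D2 Δ x = -(φ x * D1 ψ x - ψ x * D1 φ x))
    (u₁ : ℝ × ℝ → ℝ)
    (hu₁ : ∀ x : ℝ × ℝ, u₁ x = u x - 2 * D1 (D1 (fun y => Real.log |Δ y|)) x) :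
    ∀ x : ℝ × ℝ,
      D2 (fun y => ψ y / Δ y) x + D1 (D1 (fun y => ψ y / Δ y)) x -
        u₁ x * (ψ x / Δ x) = 0 := by
  have Dψ : Differentiable ℝ ψ := hψ.differentiable (by simp)
  have DΔ : Differentiable ℝ Δ := hΔ.differentiable (by simp)
  have Dφ : Differentiable ℝ φ := hφ.differentiable (by simp)
  have DD1ψ : Differentiable ℝ (D1 ψ) := (contDiff_D1_s13 hψ).differentiable (by simp)
  have DD1Δ : Differentiable ℝ (D1 Δ) := (contDiff_D1_s13 hΔ).differentiable (by simp)
  intro x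
  -- D2 of b = ψ/Δ
  have hb2 : D2 (fun y => ψ y / Δ y) x
      = (D2 ψ x * Δ x - ψ x * D2 Δ x) / (Δ x) ^ 2 := by
    have := ((hasDerivAt_slice2 Dψ x).div (hasDerivAt_slice2 DΔ x) (hΔ0 x)).deriv
    simpa [D2, Pi.div_def] using this
  -- D1 of b as a function
  have hD1b : D1 (fun y => ψ y / Δ y)
      = fun y => (D1 ψ y * Δ y - ψ y * D1 Δ y) / (Δ y) ^ 2 :=
    funext fun y =>
      ((hasDerivAt_slice1 Dψ y).div (hasDerivAt_slice1 DΔ y) (hΔ0 y)).deriv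
  -- second x₁ derivative of b
  have hb11 : D1 (D1 (fun y => ψ y / Δ y)) x
      = ((D1 (D1 ψ) x * Δ x + D1 ψ x * D1 Δ x
            - (D1 ψ x * D1 Δ x + ψ x * D1 (D1 Δ) x)) * (Δ x) ^ 2
          - (D1 ψ x * Δ x - ψ x * D1 Δ x) * (2 * Δ x * D1 Δ x)) / ((Δ x) ^ 2) ^ 2 := by
    rw [hD1b]
    have hnum : HasDerivAt
        (fun t => D1 ψ (t, x.2) * Δ (t, x.2) - ψ (t, x.2) * D1 Δ (t, x.2))
        (D1 (D1 ψ) x * Δ x + D1 ψ x * D1 Δ x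
          - (D1 ψ x * D1 Δ x + ψ x * D1 (D1 Δ) x)) x.1 :=
      ((hasDerivAt_slice1 DD1ψ x).mul (hasDerivAt_slice1 DΔ x)).sub
        ((hasDerivAt_slice1 Dψ x).mul (hasDerivAt_slice1 DD1Δ x))
    have hden : HasDerivAt (fun t => Δ (t, x.2) ^ 2) (2 * Δ x * D1 Δ x) x.1 := by
      have := (hasDerivAt_slice1 DΔ x).fun_pow 2
      refine this.congr_deriv ?_
      push_cast
      ring
    have hden0 : Δ (x.1, x.2) ^ 2 ≠ 0 := pow_ne_zero _ (hΔ0 x)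
    have := (hnum.div hden hden0).deriv
    simpa [D1, Pi.div_def, Pi.mul_def] using this
  -- first x₁ derivative of log |Δ|
  have hlog1 : D1 (fun y => Real.log |Δ y|) = fun y => D1 Δ y / Δ y := by
    funext y
    have heq : (fun t => Real.log |Δ (t, y.2)|) = fun t => Real.log (Δ (t, y.2)) :=
      funext fun t => Real.log_abs _
    have := ((hasDerivAt_slice1 DΔ y).log (hΔ0 y)).deriv
    simpa [D1, heq] using this
  -- second x₁ derivative of log |Δ|
  have hlog2 : D1 (D1 (fun y => Real.log |Δ y|)) x
      = (D1 (D1 Δ) x * Δ x - D1 Δ x * D1 Δ x) / (Δ x) ^ 2 := by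
    rw [hlog1]
    have := ((hasDerivAt_slice1 DD1Δ x).div (hasDerivAt_slice1 DΔ x) (hΔ0 x)).deriv
    simpa [D1, Pi.div_def, Pi.mul_def] using this
  -- second x₁ derivative of Δ from hΔ1
  have hΔ11 : D1 (D1 Δ) x = D1 φ x * ψ x + φ x * D1 ψ x := by
    have hfun : D1 Δ = fun y => φ y * ψ y := funext hΔ1
    rw [hfun]
    have := ((hasDerivAt_slice1 Dφ x).mul (hasDerivAt_slice1 Dψ x)).deriv
    simpa [D1, Pi.div_def, Pi.mul_def] using this
  have hP2 : D2 ψ x = u x * ψ x - D1 (D1 ψ) x := by linarith [hψeq x]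
  rw [hb2, hb11, hu₁ x, hlog2, hΔ11, hP2, hΔ1 x, hΔ2 x]
  have hA := hΔ0 x
  field_simp
  ring
end

section
/- Let α₁ < κ₂ < α₂ < κ₁ be real numbers, and let p₁, p₂, q₁, q₂ : ℝ² → ℝ be continuous functions with p_l(x) > 0 and q_j(x) > 0 for all x ∈ ℝ² and all j,l ∈ {1,2}. For j,l ∈ {1,2} define B_{jl}(x₁,x₂) = ∫_{−σ_{jl}∞}^{x₁} p_l(s,x₂)q_j(s,x₂) ds with σ_{jl} = sign(κ_l − α_j), assuming all these improper integrals converge for every (x₁,x₂). Let c_{jl} be real constants with c_{jl}·(κ_l − α_j) ≥ 0 for all j,l, and set A_{jl} = c_{jl} + B_{jl}. Then det A(x) = A₁₁(x)A₂₂(x) − A₁₂(x)A₂₁(x) < 0 for every x ∈ ℝ²; in particular Δ₁Δ₂ = det A has no zeros in the plane. -/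
open MeasureTheory Filter Set

lemma pos_integral_halfline (f : ℝ → ℝ) (a : ℝ) (hf : ∀ s, 0 < f s)
    (hfi : IntegrableOn f (Set.Iio a)) : 0 < ∫ s in Set.Iio a, f s := by
  rw [MeasureTheory.setIntegral_pos_iff_support_of_nonneg_ae
    (Filter.Eventually.of_forall fun s => (hf s).le) hfi]
  have : Function.support f = Set.univ := by
    ext s; simp [Function.support, (hf s).ne']
  rw [this, Set.univ_inter]
  simp [Real.volume_Iio]

lemma pos_integral_halfline' (f : ℝ → ℝ) (a : ℝ) (hf : ∀ s, 0 < f s)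
    (hfi : IntegrableOn f (Set.Ioi a)) : 0 < ∫ s in Set.Ioi a, f s := by
  rw [MeasureTheory.setIntegral_pos_iff_support_of_nonneg_ae
    (Filter.Eventually.of_forall fun s => (hf s).le) hfi]
  have : Function.support f = Set.univ := by
    ext s; simp [Function.support, (hf s).ne']
  rw [this, Set.univ_inter]
  simp [Real.volume_Ioi]

/-- Regularity of the two-soliton tau function. Let
`α₁ < κ₂ < α₂ < κ₁`, let `p₁, p₂, q₁, q₂` be continuous and everywhere positive, let
`B_{jl}(x₁,x₂) = ∫_{-σ_{jl}∞}^{x₁} p_l(s,x₂)q_j(s,x₂) ds` with `σ_{jl} = sign(κ_l - α_j)`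
(all improper integrals assumed convergent), and let `c_{jl}` satisfy
`c_{jl}(κ_l - α_j) ≥ 0`. With `A_{jl} = c_{jl} + B_{jl}`, the determinant
`det A = A₁₁A₂₂ - A₁₂A₂₁` is strictly negative everywhere; in particular
`Δ₁Δ₂ = det A` has no zeros in the plane. -/
theorem two_soliton_det_no_zeros
    (κ₁ κ₂ α₁ α₂ : ℝ) (hord : α₁ < κ₂ ∧ κ₂ < α₂ ∧ α₂ < κ₁)
    (p₁ p₂ q₁ q₂ : ℝ × ℝ → ℝ)
    (hp₁ : Continuous p₁) (hp₂ : Continuous p₂)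
    (hq₁ : Continuous q₁) (hq₂ : Continuous q₂)
    (hp₁pos : ∀ x, 0 < p₁ x) (hp₂pos : ∀ x, 0 < p₂ x)
    (hq₁pos : ∀ x, 0 < q₁ x) (hq₂pos : ∀ x, 0 < q₂ x)
    (hint : ∀ (p q : ℝ × ℝ → ℝ) (κ α : ℝ),
      ((p = p₁ ∧ κ = κ₁) ∨ (p = p₂ ∧ κ = κ₂)) →
      ((q = q₁ ∧ α = α₁) ∨ (q = q₂ ∧ α = α₂)) →
      ∀ x₁ x₂ : ℝ, IntegrableOn (fun s => p (s, x₂) * q (s, x₂))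
        (if 0 < κ - α then Set.Iio x₁ else Set.Ioi x₁))
    (B₁₁ B₁₂ B₂₁ B₂₂ : ℝ × ℝ → ℝ)
    (hB₁₁ : ∀ x₁ x₂ : ℝ, B₁₁ (x₁, x₂) =
      if 0 < κ₁ - α₁ then ∫ s in Set.Iio x₁, p₁ (s, x₂) * q₁ (s, x₂)
      else -∫ s in Set.Ioi x₁, p₁ (s, x₂) * q₁ (s, x₂))
    (hB₁₂ : ∀ x₁ x₂ : ℝ, B₁₂ (x₁, x₂) =
      if 0 < κ₂ - α₁ then ∫ s in Set.Iio x₁, p₂ (s, x₂) * q₁ (s, x₂)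
      else -∫ s in Set.Ioi x₁, p₂ (s, x₂) * q₁ (s, x₂))
    (hB₂₁ : ∀ x₁ x₂ : ℝ, B₂₁ (x₁, x₂) =
      if 0 < κ₁ - α₂ then ∫ s in Set.Iio x₁, p₁ (s, x₂) * q₂ (s, x₂)
      else -∫ s in Set.Ioi x₁, p₁ (s, x₂) * q₂ (s, x₂))
    (hB₂₂ : ∀ x₁ x₂ : ℝ, B₂₂ (x₁, x₂) =
      if 0 < κ₂ - α₂ then ∫ s in Set.Iio x₁, p₂ (s, x₂) * q₂ (s, x₂)
      else -∫ s in Set.Ioi x₁, p₂ (s, x₂) * q₂ (s, x₂))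
    (c₁₁ c₁₂ c₂₁ c₂₂ : ℝ)
    (hc₁₁ : 0 ≤ c₁₁ * (κ₁ - α₁)) (hc₁₂ : 0 ≤ c₁₂ * (κ₂ - α₁))
    (hc₂₁ : 0 ≤ c₂₁ * (κ₁ - α₂)) (hc₂₂ : 0 ≤ c₂₂ * (κ₂ - α₂)) :
    ∀ x : ℝ × ℝ,
      (c₁₁ + B₁₁ x) * (c₂₂ + B₂₂ x) - (c₁₂ + B₁₂ x) * (c₂₁ + B₂₁ x) < 0 := by

  obtain ⟨h1, h2, h3⟩ := hord
  rintro ⟨x₁, x₂⟩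
  have hκ₁α₁ : 0 < κ₁ - α₁ := by linarith
  have hκ₂α₁ : 0 < κ₂ - α₁ := by linarith
  have hκ₁α₂ : 0 < κ₁ - α₂ := by linarith
  have hκ₂α₂ : ¬ (0 < κ₂ - α₂) := by push_neg; linarith
  -- sign constraints on the constants
  have hc₁₁' : 0 ≤ c₁₁ := nonneg_of_mul_nonneg_left hc₁₁ hκ₁α₁
  have hc₁₂' : 0 ≤ c₁₂ := nonneg_of_mul_nonneg_left hc₁₂ hκ₂α₁
  have hc₂₁' : 0 ≤ c₂₁ := nonneg_of_mul_nonneg_left hc₂₁ hκ₁α₂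
  have hc₂₂' : c₂₂ ≤ 0 := by nlinarith
  -- integrability facts
  have hi₁₁ := hint p₁ q₁ κ₁ α₁ (Or.inl ⟨rfl, rfl⟩) (Or.inl ⟨rfl, rfl⟩) x₁ x₂
  have hi₁₂ := hint p₂ q₁ κ₂ α₁ (Or.inr ⟨rfl, rfl⟩) (Or.inl ⟨rfl, rfl⟩) x₁ x₂
  have hi₂₁ := hint p₁ q₂ κ₁ α₂ (Or.inl ⟨rfl, rfl⟩) (Or.inr ⟨rfl, rfl⟩) x₁ x₂
  have hi₂₂ := hint p₂ q₂ κ₂ α₂ (Or.inr ⟨rfl, rfl⟩) (Or.inr ⟨rfl, rfl⟩) x₁ x₂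
  rw [if_pos hκ₁α₁] at hi₁₁
  rw [if_pos hκ₂α₁] at hi₁₂
  rw [if_pos hκ₁α₂] at hi₂₁
  rw [if_neg hκ₂α₂] at hi₂₂
  -- values of the B's
  have hB11 := hB₁₁ x₁ x₂; rw [if_pos hκ₁α₁] at hB11
  have hB12 := hB₁₂ x₁ x₂; rw [if_pos hκ₂α₁] at hB12
  have hB21 := hB₂₁ x₁ x₂; rw [if_pos hκ₁α₂] at hB21
  have hB22 := hB₂₂ x₁ x₂; rw [if_neg hκ₂α₂] at hB22
  -- positivity of the integrals
  have hpB11 : 0 < B₁₁ (x₁, x₂) := by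
    rw [hB11]
    exact pos_integral_halfline _ _ (fun s => mul_pos (hp₁pos _) (hq₁pos _)) hi₁₁
  have hpB12 : 0 < B₁₂ (x₁, x₂) := by
    rw [hB12]
    exact pos_integral_halfline _ _ (fun s => mul_pos (hp₂pos _) (hq₁pos _)) hi₁₂
  have hpB21 : 0 < B₂₁ (x₁, x₂) := by
    rw [hB21]
    exact pos_integral_halfline _ _ (fun s => mul_pos (hp₁pos _) (hq₂pos _)) hi₂₁
  have hpB22 : B₂₂ (x₁, x₂) < 0 := by
    rw [hB22, neg_lt, neg_zero]
    exact pos_integral_halfline' _ _ (fun s => mul_pos (hp₂pos _) (hq₂pos _)) hi₂₂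
  nlinarith [mul_pos (add_pos_of_nonneg_of_pos hc₁₂' hpB12)
      (add_pos_of_nonneg_of_pos hc₂₁' hpB21),
    mul_pos (add_pos_of_nonneg_of_pos hc₁₁' hpB11)
      (neg_pos.mpr (add_neg_of_nonpos_of_neg hc₂₂' hpB22))]
end
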